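/- arXiv:1503.02166 — 5 statements merged into one kernel-verified Lean document; each statement's English description precedes it below -/
import Mathlib

section
/- Let (U(t))_{t∈ℝ} be a strongly continuous unitary one-parameter group on a complex Hilbert space 𝓗. Let Φ(t), B(t), B₁(t), …, B_n(t) (t ≥ 1) be families of bounded operators on 𝓗 such that each Φ(t) is self-adjoint, sup_{t≥1} ‖Φ(t)‖ < ∞, and t ↦ B(t)ψ and t ↦ B_i(t)ψ are continuous for every ψ. Assume there is C₀ > 0 such that for every φ ∈ 𝓗 the function t ↦ ⟨U(t)φ, Φ(t)U(t)φ⟩ is differentiable on [1,∞) with derivative at each t ≥ 1 at least C₀‖B(t)U(t)φ‖² − Σ_{i=1}^n ‖B_i(t)U(t)φ‖², and assume there is C > 0 such that ∫₁^∞ ‖B_i(t)U(t)φ‖² dt ≤ C‖φ‖² for all φ ∈ 𝓗 and all i = 1,…,n. Then there exists C₁ > 0 such that ∫₁^∞ ‖B(t)U(t)φ‖² dt ≤ C₁‖φ‖² for all φ ∈ 𝓗. -/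
open scoped InnerProductSpace
open MeasureTheory Filter Set Topology

/-! The energy `⟨U(t)φ, Φ(t)U(t)φ⟩` is bounded by `M‖φ‖²` with `M = sup ‖Φ‖`, so integrating the
derivative inequality over `[1, T]` gives
`C₀ ∫₁ᵀ ‖B(t)U(t)φ‖² ≤ 2M‖φ‖² + Σᵢ ∫₁ᵀ ‖Bᵢ(t)U(t)φ‖² ≤ (2M + nC)‖φ‖²`, uniformly in `T`.
The integrands are continuous because a strongly continuous family of operators is norm-bounded
on compact sets (Banach–Steinhaus). -/

theorem IsCompact.continuousOn_clm_apply {𝕜 E F X : Type*} [NontriviallyNormedField 𝕜]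
    [NormedAddCommGroup E] [NormedSpace 𝕜 E] [CompleteSpace E]
    [NormedAddCommGroup F] [NormedSpace 𝕜 F] [TopologicalSpace X] {K : Set X}
    (hK : IsCompact K) {B : X → E →L[𝕜] F} (hB : ∀ x, ContinuousOn (fun t => B t x) K)
    {u : X → E} (hu : ContinuousOn u K) : ContinuousOn (fun t => B t (u t)) K := by
  obtain ⟨M, hM⟩ : ∃ M, ∀ t : K, ‖B t‖ ≤ M :=
    banach_steinhaus fun x =>
      (hK.exists_bound_of_continuousOn (hB x)).imp fun _ hC t => hC t t.2
  intro s hs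
  have hlim : Tendsto (fun t => B t (u t) - B t (u s)) (𝓝[K] s) (𝓝 0) := by
    refine squeeze_zero_norm' ?_ (by simpa using ((hu s hs).sub_const (u s)).norm.const_mul M)
    filter_upwards [self_mem_nhdsWithin] with t ht
    calc ‖B t (u t) - B t (u s)‖ = ‖B t (u t - u s)‖ := by rw [map_sub]
      _ ≤ ‖B t‖ * ‖u t - u s‖ := (B t).le_opNorm _
      _ ≤ M * ‖u t - u s‖ := by gcongr; exact hM ⟨t, ht⟩
  simpa [ContinuousWithinAt] using hlim.add (hB (u s) s hs)

theorem ContinuousLinearMap.abs_re_inner_self_apply_le {𝕜 E : Type*} [RCLike 𝕜]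
    [NormedAddCommGroup E] [InnerProductSpace 𝕜 E] (A : E →L[𝕜] E) (v : E) :
    |RCLike.re ⟪v, A v⟫_𝕜| ≤ ‖A‖ * ‖v‖ ^ 2 :=
  calc |RCLike.re ⟪v, A v⟫_𝕜| ≤ ‖⟪v, A v⟫_𝕜‖ := RCLike.abs_re_le_norm _
    _ ≤ ‖v‖ * ‖A v‖ := norm_inner_le_norm _ _
    _ ≤ ‖v‖ * (‖A‖ * ‖v‖) := by gcongr; exact A.le_opNorm v
    _ = ‖A‖ * ‖v‖ ^ 2 := by ring

theorem intervalIntegral_le_sub_of_hasDerivWithinAt_Ici {f w : ℝ → ℝ} {a b : ℝ} (hab : a ≤ b)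
    (hw : ContinuousOn w (Icc a b))
    (hf : ∀ x ∈ Icc a b, ∃ d, HasDerivWithinAt f d (Ici a) x ∧ w x ≤ d) :
    ∫ x in a..b, w x ≤ f b - f a := by
  choose! f' hf' hwf' using hf
  exact intervalIntegral.integral_le_sub_of_hasDeriv_right_of_le hab
    (fun x hx => (hf' x hx).continuousWithinAt.mono Icc_subset_Ici_self)
    (fun x hx => (hf' x (Ioo_subset_Icc_self hx)).mono (Ioi_subset_Ici hx.1.le))
    (hw.integrableOn_compact isCompact_Icc) (fun x hx => hwf' x (Ioo_subset_Icc_self hx))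

theorem mul_intervalIntegral_le_of_hasDerivWithinAt_Ici {ι : Type*} [Fintype ι]
    {f g : ℝ → ℝ} {h : ι → ℝ → ℝ} {a b c K : ℝ} (hab : a ≤ b) (hg : ContinuousOn g (Icc a b))
    (hh : ∀ i, ContinuousOn (h i) (Icc a b)) (hfK : ∀ x ∈ Icc a b, |f x| ≤ K)
    (hf : ∀ x ∈ Icc a b, ∃ d, HasDerivWithinAt f d (Ici a) x ∧ c * g x - ∑ i, h i x ≤ d) :
    c * ∫ x in a..b, g x ≤ 2 * K + ∑ i, ∫ x in a..b, h i x := by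
  have hsum : ContinuousOn (fun x => ∑ i, h i x) (Icc a b) :=
    continuousOn_finsetSum _ fun i _ => hh i
  have hfab : ∫ x in a..b, (c * g x - ∑ i, h i x) ≤ f b - f a :=
    intervalIntegral_le_sub_of_hasDerivWithinAt_Ici hab ((continuousOn_const.mul hg).sub hsum) hf
  rw [intervalIntegral.integral_sub ((hg.intervalIntegrable_of_Icc hab).const_mul c)
      (hsum.intervalIntegrable_of_Icc hab), intervalIntegral.integral_const_mul,
    intervalIntegral.integral_finsetSum fun i _ => (hh i).intervalIntegrable_of_Icc hab] at hfab
  linarith [abs_le.1 (hfK a (left_mem_Icc.2 hab)), abs_le.1 (hfK b (right_mem_Icc.2 hab))]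

theorem ofReal_intervalIntegral_eq_setLIntegral_Ioc {g : ℝ → ℝ} {a b : ℝ} (hab : a ≤ b)
    (hg : ContinuousOn g (Icc a b)) (hg0 : ∀ t, 0 ≤ g t) :
    ENNReal.ofReal (∫ t in a..b, g t) = ∫⁻ t in Ioc a b, ENNReal.ofReal (g t) := by
  rw [intervalIntegral.integral_of_le hab]
  exact ofReal_integral_eq_lintegral_ofReal
    ((hg.integrableOn_compact isCompact_Icc).mono_set Ioc_subset_Icc_self) (ae_of_all _ hg0)

theorem intervalIntegral_le_of_setLIntegral_Ioi_le {g : ℝ → ℝ} {a b c : ℝ} (hab : a ≤ b)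
    (hg : ContinuousOn g (Icc a b)) (hg0 : ∀ t, 0 ≤ g t) (hc : 0 ≤ c)
    (h : ∫⁻ t in Ioi a, ENNReal.ofReal (g t) ≤ ENNReal.ofReal c) :
    ∫ t in a..b, g t ≤ c := by
  rw [← ENNReal.ofReal_le_ofReal_iff hc, ofReal_intervalIntegral_eq_setLIntegral_Ioc hab hg hg0]
  exact (lintegral_mono_set Ioc_subset_Ioi_self).trans h

theorem setLIntegral_Ioi_le_of_intervalIntegral_le {g : ℝ → ℝ} {a c : ℝ}
    (hg : ∀ b, ContinuousOn g (Icc a b)) (hg0 : ∀ t, 0 ≤ g t)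
    (h : ∀ b, a ≤ b → ∫ t in a..b, g t ≤ c) :
    ∫⁻ t in Ioi a, ENNReal.ofReal (g t) ≤ ENNReal.ofReal c := by
  have hIoi : Ioi a = ⋃ n : ℕ, Ioc a (a + n) := by
    ext t
    simp only [mem_Ioi, mem_iUnion, mem_Ioc]
    refine ⟨fun ht => ?_, fun ⟨_, ht, _⟩ => ht⟩
    obtain ⟨n, hn⟩ := exists_nat_gt (t - a)
    exact ⟨n, ht, by linarith⟩
  have hmono : Monotone fun n : ℕ => Ioc a (a + n) := fun m n hmn =>
    Ioc_subset_Ioc_right (by gcongr)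
  rw [hIoi, setLIntegral_iUnion_of_directed _ hmono.directed_le]
  refine iSup_le fun n => ?_
  have hn : a ≤ a + n := le_add_of_nonneg_right n.cast_nonneg
  rw [← ofReal_intervalIntegral_eq_setLIntegral_Ioc hn (hg _) hg0]
  exact ENNReal.ofReal_le_ofReal (h _ hn)

theorem stmt_2_general {H : Type*} [NormedAddCommGroup H] [InnerProductSpace ℂ H] [CompleteSpace H]
    (U : ℝ → H →L[ℂ] H)
    (hUiso : ∀ (t : ℝ) (ψ : H), ‖U t ψ‖ = ‖ψ‖)
    (hUcont : ∀ ψ : H, Continuous fun t => U t ψ)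
    (n : ℕ) (Φ B : ℝ → H →L[ℂ] H) (Bi : Fin n → ℝ → H →L[ℂ] H)
    (hΦbdd : ∃ M : ℝ, ∀ t : ℝ, 1 ≤ t → ‖Φ t‖ ≤ M)
    (hBcont : ∀ ψ : H, ContinuousOn (fun t => B t ψ) (Set.Ici 1))
    (hBicont : ∀ (i : Fin n) (ψ : H), ContinuousOn (fun t => Bi i t ψ) (Set.Ici 1))
    (C₀ : ℝ) (hC₀ : 0 < C₀)
    (hderiv : ∀ (φ : H) (t : ℝ), 1 ≤ t → ∃ d : ℝ,
      HasDerivWithinAt (fun s : ℝ => (⟪U s φ, Φ s (U s φ)⟫_ℂ).re) d (Set.Ici 1) t ∧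
        C₀ * ‖B t (U t φ)‖ ^ 2 - ∑ i : Fin n, ‖Bi i t (U t φ)‖ ^ 2 ≤ d)
    (C : ℝ) (hC : 0 < C)
    (hint : ∀ (i : Fin n) (φ : H),
      ∫⁻ t in Set.Ioi (1 : ℝ), ENNReal.ofReal (‖Bi i t (U t φ)‖ ^ 2) ≤
        ENNReal.ofReal (C * ‖φ‖ ^ 2)) :
    ∃ C₁ : ℝ, 0 < C₁ ∧ ∀ φ : H,
      ∫⁻ t in Set.Ioi (1 : ℝ), ENNReal.ofReal (‖B t (U t φ)‖ ^ 2) ≤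
        ENNReal.ofReal (C₁ * ‖φ‖ ^ 2) := by
  obtain ⟨M, hM⟩ := hΦbdd
  have hM0 : 0 ≤ M := (norm_nonneg _).trans (hM 1 le_rfl)
  refine ⟨(2 * M + n * C) / C₀ + 1, by positivity, fun φ => ?_⟩
  have hsq : ∀ A : ℝ → H →L[ℂ] H, (∀ ψ, ContinuousOn (fun t => A t ψ) (Ici 1)) →
      ∀ T, ContinuousOn (fun t => ‖A t (U t φ)‖ ^ 2) (Icc 1 T) := fun A hA T =>
    (isCompact_Icc.continuousOn_clm_apply (fun ψ => (hA ψ).mono Icc_subset_Ici_self)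
      (hUcont φ).continuousOn).norm.pow 2
  have henergy : ∀ t, 1 ≤ t → |(⟪U t φ, Φ t (U t φ)⟫_ℂ).re| ≤ M * ‖φ‖ ^ 2 := fun t ht =>
    ((Φ t).abs_re_inner_self_apply_le _).trans (by rw [hUiso]; gcongr; exact hM t ht)
  refine setLIntegral_Ioi_le_of_intervalIntegral_le (hsq B hBcont) (fun _ => by positivity)
    fun T hT => ?_
  have hfinite := mul_intervalIntegral_le_of_hasDerivWithinAt_Ici hT (hsq B hBcont T)
    (fun i => hsq _ (hBicont i) T) (fun t ht => henergy t ht.1) fun t ht => hderiv φ t ht.1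
  have hsum : ∑ i, ∫ t in 1..T, ‖Bi i t (U t φ)‖ ^ 2 ≤ ∑ _i : Fin n, C * ‖φ‖ ^ 2 :=
    Finset.sum_le_sum fun i _ => intervalIntegral_le_of_setLIntegral_Ioi_le hT
      (hsq _ (hBicont i) T) (fun _ => by positivity) (by positivity) (hint i φ)
  rw [Finset.sum_const, Finset.card_univ, Fintype.card_fin, nsmul_eq_mul] at hsum
  rw [add_mul, div_mul_eq_mul_div, ← sub_le_iff_le_add, le_div_iff₀ hC₀]
  nlinarith [norm_nonneg φ]

/-- **Lemma A.1 (Sigal–Soffer / Putnam–Kato).** Let `(U(t))` be a strongly continuous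
unitary one-parameter group, `Φ(t)` a uniformly bounded family of self-adjoint operators
(for `t ≥ 1`), and `B(t), B₁(t), …, Bₙ(t)` strongly continuous families of bounded
operators. If for every `φ` the function `t ↦ ⟨U(t)φ, Φ(t)U(t)φ⟩` is differentiable on
`[1,∞)` with derivative at least `C₀‖B(t)U(t)φ‖² − Σᵢ ‖Bᵢ(t)U(t)φ‖²`, and
`∫₁^∞ ‖Bᵢ(t)U(t)φ‖² dt ≤ C‖φ‖²` for all `φ` and `i`, then there is `C₁ > 0` with
`∫₁^∞ ‖B(t)U(t)φ‖² dt ≤ C₁‖φ‖²` for all `φ`. -/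
theorem stmt_2 {H : Type*} [NormedAddCommGroup H] [InnerProductSpace ℂ H] [CompleteSpace H]
    (U : ℝ → H →L[ℂ] H)
    (hU0 : U 0 = 1)
    (hUadd : ∀ s t : ℝ, U (s + t) = (U s).comp (U t))
    (hUiso : ∀ (t : ℝ) (ψ : H), ‖U t ψ‖ = ‖ψ‖)
    (hUcont : ∀ ψ : H, Continuous fun t => U t ψ)
    (n : ℕ) (Φ B : ℝ → H →L[ℂ] H) (Bi : Fin n → ℝ → H →L[ℂ] H)
    (hΦsa : ∀ t : ℝ, 1 ≤ t → IsSelfAdjoint (Φ t))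
    (hΦbdd : ∃ M : ℝ, ∀ t : ℝ, 1 ≤ t → ‖Φ t‖ ≤ M)
    (hBcont : ∀ ψ : H, ContinuousOn (fun t => B t ψ) (Set.Ici 1))
    (hBicont : ∀ (i : Fin n) (ψ : H), ContinuousOn (fun t => Bi i t ψ) (Set.Ici 1))
    (C₀ : ℝ) (hC₀ : 0 < C₀)
    (hderiv : ∀ (φ : H) (t : ℝ), 1 ≤ t → ∃ d : ℝ,
      HasDerivWithinAt (fun s : ℝ => (⟪U s φ, Φ s (U s φ)⟫_ℂ).re) d (Set.Ici 1) t ∧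
        C₀ * ‖B t (U t φ)‖ ^ 2 - ∑ i : Fin n, ‖Bi i t (U t φ)‖ ^ 2 ≤ d)
    (C : ℝ) (hC : 0 < C)
    (hint : ∀ (i : Fin n) (φ : H),
      ∫⁻ t in Set.Ioi (1 : ℝ), ENNReal.ofReal (‖Bi i t (U t φ)‖ ^ 2) ≤
        ENNReal.ofReal (C * ‖φ‖ ^ 2)) :
    ∃ C₁ : ℝ, 0 < C₁ ∧ ∀ φ : H,
      ∫⁻ t in Set.Ioi (1 : ℝ), ENNReal.ofReal (‖B t (U t φ)‖ ^ 2) ≤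
        ENNReal.ofReal (C₁ * ‖φ‖ ^ 2) :=
  stmt_2_general U hUiso hUcont n Φ B Bi hΦbdd hBcont hBicont C₀ hC₀ hderiv C hC hint
end

section
/- Let ν ∈ ℕ, ν ≥ 1, and let Ω, ω : ℝ^ν → ℝ be nonnegative functions of class C¹. Assume that at least one of the following holds: Ω(η) → ∞ as |η| → ∞, or ω(k) → ∞ as |k| → ∞. Then the set Θ = {(P, λ) ∈ ℝ^ν × ℝ : there exists k ∈ ℝ^ν with λ = Ω(P−k) + ω(k) and ∇Ω(P−k) = ∇ω(k)} is a closed subset of ℝ^{ν+1}. -/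
open Filter

/-!
`Θ` is the image of the closed set `{(P, k) | ∇Ω(P - k) = ∇ω(k)}` under the continuous map
`(P, k) ↦ (P, Ω(P - k) + ω(k))`. The substitution `k ↦ P - k` swaps the roles of `Ω` and `ω`,
so we may assume that `ω` is coercive. Then on the preimage of a compact set, `k` stays in a
sublevel set of `ω` (as `Ω ≥ 0`), so the map is proper, hence closed.
-/

theorem ContDiff.continuous_gradient {E : Type*} [NormedAddCommGroup E] [InnerProductSpace ℝ E]
    [CompleteSpace E] {f : E → ℝ} (hf : ContDiff ℝ 1 f) : Continuous (gradient f) :=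
  (InnerProductSpace.toDual ℝ E).symm.continuous.comp (hf.continuous_fderiv one_ne_zero)

theorem isCompact_sublevel_of_tendsto_cocompact {X : Type*} [TopologicalSpace X] {f : X → ℝ}
    (hf : Continuous f) (hcoerc : Tendsto f (cocompact X) atTop) (b : ℝ) :
    IsCompact {x | f x ≤ b} := by
  obtain ⟨K, hK, hsub⟩ := mem_cocompact'.mp (hcoerc.eventually (eventually_gt_atTop b))
  exact hK.of_isClosed_subset (isClosed_le hf continuous_const)
    fun x (hx : f x ≤ b) => hsub hx.not_gt

section EnergyMomentum

variable {E : Type*} [NormedAddCommGroup E]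

def energyMomentum (Ω ω : E → ℝ) (q : E × E) : E × ℝ :=
  (q.1, Ω (q.1 - q.2) + ω q.2)

theorem continuous_energyMomentum {Ω ω : E → ℝ} (hΩ : Continuous Ω) (hω : Continuous ω) :
    Continuous (energyMomentum Ω ω) := by
  unfold energyMomentum
  fun_prop

theorem isProperMap_energyMomentum {Ω ω : E → ℝ} (hΩ : Continuous Ω) (hω : Continuous ω)
    (hΩ0 : ∀ η, 0 ≤ Ω η) (hcoerc : Tendsto ω (cocompact E) atTop) :
    IsProperMap (energyMomentum Ω ω) := by
  refine isProperMap_iff_isCompact_preimage.mpr ⟨continuous_energyMomentum hΩ hω, fun K hK => ?_⟩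
  obtain ⟨b, hb⟩ := (hK.image continuous_snd).bddAbove
  refine ((hK.image continuous_fst).prod (isCompact_sublevel_of_tendsto_cocompact hω hcoerc b))
    |>.of_isClosed_subset (hK.isClosed.preimage (continuous_energyMomentum hΩ hω)) ?_
  intro q hq
  have hE : Ω (q.1 - q.2) + ω q.2 ≤ b := hb ⟨_, hq, rfl⟩
  exact ⟨⟨_, hq, rfl⟩, show ω q.2 ≤ b by linarith [hΩ0 (q.1 - q.2)]⟩

end EnergyMomentum

section Threshold

variable {E : Type*} [NormedAddCommGroup E] [InnerProductSpace ℝ E] [CompleteSpace E]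

def thresholdSet (Ω ω : E → ℝ) : Set (E × ℝ) :=
  {p | ∃ k, p.2 = Ω (p.1 - k) + ω k ∧ gradient Ω (p.1 - k) = gradient ω k}

theorem thresholdSet_comm (Ω ω : E → ℝ) : thresholdSet Ω ω = thresholdSet ω Ω := by
  suffices ∀ Ω ω : E → ℝ, thresholdSet Ω ω ⊆ thresholdSet ω Ω from
    (this Ω ω).antisymm (this ω Ω)
  rintro Ω ω p ⟨k, hE, hgrad⟩
  exact ⟨p.1 - k, by simp [hE, add_comm], by simp [hgrad]⟩

theorem thresholdSet_eq_image (Ω ω : E → ℝ) :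
    thresholdSet Ω ω =
      energyMomentum Ω ω '' {q | gradient Ω (q.1 - q.2) = gradient ω q.2} := by
  ext p
  constructor
  · rintro ⟨k, hE, hgrad⟩
    exact ⟨(p.1, k), hgrad, Prod.ext rfl hE.symm⟩
  · rintro ⟨q, hgrad, rfl⟩
    exact ⟨q.2, rfl, hgrad⟩

theorem isClosed_thresholdSet {Ω ω : E → ℝ}
    (hΩ : ContDiff ℝ 1 Ω) (hω : ContDiff ℝ 1 ω) (hΩ0 : ∀ η, 0 ≤ Ω η)
    (hcoerc : Tendsto ω (cocompact E) atTop) :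
    IsClosed (thresholdSet Ω ω) := by
  rw [thresholdSet_eq_image]
  refine (isProperMap_energyMomentum hΩ.continuous hω.continuous hΩ0 hcoerc).isClosedMap _ ?_
  exact isClosed_eq (hΩ.continuous_gradient.comp (continuous_fst.sub continuous_snd))
    (hω.continuous_gradient.comp continuous_snd)

end Threshold

theorem stmt_8_general (ν : ℕ)
    (Ω ω : EuclideanSpace ℝ (Fin ν) → ℝ)
    (hΩ : ContDiff ℝ 1 Ω) (hω : ContDiff ℝ 1 ω)
    (hΩ0 : ∀ η, 0 ≤ Ω η) (hω0 : ∀ k, 0 ≤ ω k)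
    (hcoerc : Tendsto Ω (cocompact (EuclideanSpace ℝ (Fin ν))) atTop ∨
      Tendsto ω (cocompact (EuclideanSpace ℝ (Fin ν))) atTop) :
    IsClosed {p : EuclideanSpace ℝ (Fin ν) × ℝ |
      ∃ k : EuclideanSpace ℝ (Fin ν),
        p.2 = Ω (p.1 - k) + ω k ∧ gradient Ω (p.1 - k) = gradient ω k} := by
  change IsClosed (thresholdSet Ω ω)
  rcases hcoerc with hcoercΩ | hcoercω
  · rw [thresholdSet_comm]
    exact isClosed_thresholdSet hω hΩ hω0 hcoercΩ
  · exact isClosed_thresholdSet hΩ hω hΩ0 hcoercω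

/-- **Closedness of the threshold set `Θ` (part of Proposition 5.2).** Let `Ω, ω` be
nonnegative `C¹` dispersion relations, at least one of which tends to `∞` at infinity.
Then `Θ = {(P, λ) | ∃ k, λ = Ω(P−k) + ω(k) ∧ ∇Ω(P−k) = ∇ω(k)}` is closed in `ℝ^{ν+1}`. -/
theorem stmt_8 (ν : ℕ) (hν : 1 ≤ ν)
    (Ω ω : EuclideanSpace ℝ (Fin ν) → ℝ)
    (hΩ : ContDiff ℝ 1 Ω) (hω : ContDiff ℝ 1 ω)
    (hΩ0 : ∀ η, 0 ≤ Ω η) (hω0 : ∀ k, 0 ≤ ω k)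
    (hcoerc : Tendsto Ω (cocompact (EuclideanSpace ℝ (Fin ν))) atTop ∨
      Tendsto ω (cocompact (EuclideanSpace ℝ (Fin ν))) atTop) :
    IsClosed {p : EuclideanSpace ℝ (Fin ν) × ℝ |
      ∃ k : EuclideanSpace ℝ (Fin ν),
        p.2 = Ω (p.1 - k) + ω k ∧ gradient Ω (p.1 - k) = gradient ω k} :=
  stmt_8_general ν Ω ω hΩ hω hΩ0 hω0 hcoerc
end

section
/- Let ν ∈ ℕ, ν ≥ 1, let g : ℝ^ν → ℝ be continuous, let k₀ ∈ ℝ^ν and set λ = g(k₀). Let f : ℝ^ν → ℂ be continuous with compact support and define u_n(k) = n^{ν/2} f(n(k − k₀)) for n ≥ 1. Then: (i) ‖u_n‖_{L²(ℝ^ν)} = ‖f‖_{L²(ℝ^ν)} for all n; (ii) ‖(g − λ)u_n‖_{L²(ℝ^ν)} → 0 as n → ∞; (iii) u_n converges weakly to 0 in L²(ℝ^ν), i.e. ∫ \overline{u_n(k)} h(k) dk → 0 for every h ∈ L²(ℝ^ν). -/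
/-!
Rescaling `f` about `k₀` by the factor `n`, with the normalising factor `n^{ν/2}`, preserves the
`L²` norm (change of variables `x = n (k - k₀)` for Haar measure) and squeezes the support of `uₙ`
into balls `B(k₀, R/n)` shrinking to `k₀`. Hence `‖(g - λ) uₙ‖₂ ≤ sup_{B(k₀, R/n)} |g - λ| · ‖f‖₂`
tends to `0` by continuity of `g` at `k₀`, and by Cauchy–Schwarz `|⟪uₙ, h⟫| ≤ ‖f‖₂ ‖h‖_{L²(B(k₀, R/n))}`
tends to `0` by absolute continuity of `∫ |h|²`, the balls having vanishing measure.
-/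

open MeasureTheory Filter Metric Function
open scoped ENNReal Topology ComplexConjugate

lemma ENNReal.tendsto_nhds_zero_of_forall_eventually_le_ofReal_mul {ι : Type*} {l : Filter ι}
    {a : ι → ℝ≥0∞} {M : ℝ≥0∞} (hM : M ≠ ∞)
    (h : ∀ ε > 0, ∀ᶠ i in l, a i ≤ ENNReal.ofReal ε * M) : Tendsto a l (𝓝 0) := by
  have hlim : Tendsto (fun ε : ℝ => ENNReal.ofReal ε * M) (𝓝[>] 0) (𝓝 0) := by
    simpa using ENNReal.Tendsto.mul_const (ENNReal.tendsto_ofReal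
      (tendsto_nhdsWithin_of_tendsto_nhds tendsto_id (a := (0 : ℝ)))) (Or.inr hM)
  rw [ENNReal.tendsto_nhds_zero]
  intro η hη
  obtain ⟨ε, hε_le, hε⟩ := ((hlim.eventually (ge_mem_nhds hη)).and self_mem_nhdsWithin).exists
  filter_upwards [h ε hε] with i hi using hi.trans hε_le

section Support

variable {E G : Type*} [NormedAddCommGroup E] [NormedSpace ℝ E] [NormedAddCommGroup G]
  [NormedSpace ℝ G]

theorem support_smul_comp_smul_sub_subset {F : E → G} {R : ℝ} (hF : support F ⊆ closedBall 0 R)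
    (c : ℝ) {r : ℝ} (hr : 0 < r) (k₀ : E) :
    support (fun k => c • F (r • (k - k₀))) ⊆ closedBall k₀ (R / r) := by
  intro k hk
  have hFk : r • (k - k₀) ∈ closedBall 0 R := hF (right_ne_zero_of_smul hk)
  rw [mem_closedBall_zero_iff, norm_smul, Real.norm_of_nonneg hr.le, ← dist_eq_norm] at hFk
  rwa [mem_closedBall, le_div_iff₀ hr, mul_comm]

theorem HasCompactSupport.eventually_support_smul_comp_smul_sub_subset {ι : Type*} {l : Filter ι}
    {F : E → G} (hF : HasCompactSupport F) (c : ι → ℝ) {r : ι → ℝ} (hr : Tendsto r l atTop)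
    (k₀ : E) {δ : ℝ} (hδ : 0 < δ) :
    ∀ᶠ i in l, support (fun k => c i • F (r i • (k - k₀))) ⊆ closedBall k₀ δ := by
  obtain ⟨R, hR⟩ := hF.isBounded.subset_closedBall 0
  filter_upwards [hr.eventually_ge_atTop (max 1 (R / δ))] with i hi
  have hri : 0 < r i := one_pos.trans_le ((le_max_left _ _).trans hi)
  refine (support_smul_comp_smul_sub_subset (subset_tsupport F |>.trans hR) (c i) hri k₀).trans
    (closedBall_subset_closedBall ?_)
  rw [div_le_iff₀ hri, mul_comm, ← div_le_iff₀ hδ]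
  exact (le_max_right _ _).trans hi

end Support

section Dilation

variable {E G : Type*} [NormedAddCommGroup E] [NormedSpace ℝ E] [MeasurableSpace E] [BorelSpace E]
  [FiniteDimensional ℝ E] (μ : Measure E) [μ.IsAddHaarMeasure] [NormedAddCommGroup G]

theorem eLpNorm_comp_smul_sub (F : E → G) (p : ℝ≥0∞) {r : ℝ} (hr : r ≠ 0) (k₀ : E) :
    eLpNorm (fun k => F (r • (k - k₀))) p μ =
      ENNReal.ofReal |(r ^ Module.finrank ℝ E)⁻¹| ^ (1 / p).toReal * eLpNorm F p μ :=
  calc eLpNorm (fun k => F (r • (k - k₀))) p μ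
      = eLpNorm (fun k => F (r • k)) p (μ.map (· - k₀)) :=
        ((MeasurableEquiv.subRight k₀).measurableEmbedding.eLpNorm_map_measure
          (g := fun k => F (r • k))).symm
    _ = eLpNorm F p (μ.map (r • ·)) := by
        rw [map_sub_right_eq_self]
        exact (measurableEmbedding_const_smul₀ hr).eLpNorm_map_measure.symm
    _ = _ := by
        rw [Measure.map_addHaar_smul μ hr, eLpNorm_smul_measure_of_ne_zero (by positivity),
          smul_eq_mul]

variable [NormedSpace ℝ G]

theorem eLpNorm_smul_comp_smul_sub (F : E → G) (p : ℝ≥0∞) {r : ℝ} (hr : 0 < r) (k₀ : E) :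
    eLpNorm (fun k => r ^ (Module.finrank ℝ E / p.toReal) • F (r • (k - k₀))) p μ =
      eLpNorm F p μ := by
  refine (eLpNorm_const_smul _ (fun k => F (r • (k - k₀))) p μ).trans ?_
  rw [eLpNorm_comp_smul_sub μ F p hr.ne', ← mul_assoc]
  convert one_mul (eLpNorm F p μ)
  rw [Real.enorm_of_nonneg (by positivity), abs_of_pos (by positivity), one_div, ENNReal.toReal_inv,
    ENNReal.ofReal_rpow_of_nonneg (by positivity) (by positivity),
    ← ENNReal.ofReal_mul (by positivity), ← Real.rpow_natCast, Real.inv_rpow (by positivity),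
    ← Real.rpow_mul hr.le, ← div_eq_mul_inv, ← div_eq_mul_inv, div_self (by positivity),
    ENNReal.ofReal_one]

end Dilation

theorem tendsto_eLpNorm_sub_smul_of_support_subset_closedBall {ι X 𝕜 G : Type*}
    [PseudoMetricSpace X] [MeasurableSpace X] [NormedField 𝕜] [NormedAddCommGroup G]
    [NormedSpace 𝕜 G] {μ : Measure X} {l : Filter ι} {p : ℝ≥0∞} {g : X → 𝕜} {k₀ : X}
    (hg : ContinuousAt g k₀) {u : ι → X → G} {M : ℝ≥0∞} (hM : M ≠ ∞)
    (hu : ∀ᶠ i in l, eLpNorm (u i) p μ ≤ M)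
    (hsupp : ∀ δ > 0, ∀ᶠ i in l, support (u i) ⊆ closedBall k₀ δ) :
    Tendsto (fun i => eLpNorm (fun k => (g k - g k₀) • u i k) p μ) l (𝓝 0) := by
  refine ENNReal.tendsto_nhds_zero_of_forall_eventually_le_ofReal_mul hM fun ε hε => ?_
  obtain ⟨δ, hδ, hgδ⟩ := Metric.continuousAt_iff.1 hg ε hε
  filter_upwards [hu, hsupp (δ / 2) (half_pos hδ)] with i hMi hsi
  have hpointwise : ∀ k, ‖(g k - g k₀) • u i k‖ ≤ ε * ‖u i k‖ := fun k => by
    by_cases hk : u i k = 0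
    · simp [hk]
    have hdist : dist k k₀ < δ := (mem_closedBall.1 (hsi hk)).trans_lt (half_lt_self hδ)
    rw [norm_smul, ← dist_eq_norm]
    exact mul_le_mul_of_nonneg_right (hgδ hdist).le (norm_nonneg _)
  exact (eLpNorm_le_mul_eLpNorm_of_ae_le_mul (ae_of_all _ hpointwise) p).trans (by gcongr)

theorem enorm_integral_conj_mul_le {X 𝕜 : Type*} [MeasurableSpace X] [RCLike 𝕜] {μ : Measure X}
    {a b : X → 𝕜} (ha : AEStronglyMeasurable a μ) (hb : AEStronglyMeasurable b μ) :
    ‖∫ k, conj (a k) * b k ∂μ‖ₑ ≤ eLpNorm a 2 μ * eLpNorm b 2 μ :=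
  calc ‖∫ k, conj (a k) * b k ∂μ‖ₑ ≤ eLpNorm (fun k => conj (a k) * b k) 1 μ := by
        rw [eLpNorm_one_eq_lintegral_enorm]
        exact enorm_integral_le_lintegral_enorm _
    _ ≤ eLpNorm a 2 μ * eLpNorm b 2 μ := by
        simpa using eLpNorm_le_eLpNorm_mul_eLpNorm_of_nnnorm ha hb (fun x y => conj x * y) 1
          (ae_of_all _ fun k => by simp)

theorem exists_pos_measure_closedBall_le {X : Type*} [MetricSpace X] [ProperSpace X]
    [MeasurableSpace X] [OpensMeasurableSpace X] (μ : Measure X) [IsFiniteMeasureOnCompacts μ]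
    [NullSingletonClass μ] (k₀ : X) {η : ℝ} (hη : 0 < η) :
    ∃ δ > 0, μ (closedBall k₀ δ) ≤ ENNReal.ofReal η := by
  have hlim := (tendsto_measure_cthickening_of_isCompact (μ := μ) (isCompact_singleton (x := k₀)))
  rw [measure_singleton] at hlim
  obtain ⟨δ, hδ_le, hδ⟩ := (((hlim.mono_left nhdsWithin_le_nhds).eventually
    (ge_mem_nhds (ENNReal.ofReal_pos.2 hη))).and (self_mem_nhdsWithin (s := Set.Ioi 0))).exists
  exact ⟨δ, hδ, by rwa [cthickening_singleton _ (le_of_lt hδ)] at hδ_le⟩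

theorem tendsto_integral_conj_mul_of_support_subset_closedBall {ι X 𝕜 : Type*} [MetricSpace X]
    [ProperSpace X] [MeasurableSpace X] [OpensMeasurableSpace X] [RCLike 𝕜] {μ : Measure X}
    [IsFiniteMeasureOnCompacts μ] [NullSingletonClass μ] {l : Filter ι} {k₀ : X} {u : ι → X → 𝕜}
    (hu_meas : ∀ i, AEStronglyMeasurable (u i) μ) {M : ℝ≥0∞} (hM : M ≠ ∞)
    (hu : ∀ᶠ i in l, eLpNorm (u i) 2 μ ≤ M)
    (hsupp : ∀ δ > 0, ∀ᶠ i in l, support (u i) ⊆ closedBall k₀ δ) {h : X → 𝕜}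
    (hh : MemLp h 2 μ) :
    Tendsto (fun i => ∫ k, conj (u i k) * h k ∂μ) l (𝓝 0) := by
  rw [tendsto_zero_iff_enorm_tendsto_zero]
  refine ENNReal.tendsto_nhds_zero_of_forall_eventually_le_ofReal_mul hM fun ε hε => ?_
  obtain ⟨η, hη, hsmall⟩ := hh.eLpNorm_indicator_le one_le_two ENNReal.ofNat_ne_top hε
  obtain ⟨δ, hδ, hμδ⟩ := exists_pos_measure_closedBall_le μ k₀ hη
  filter_upwards [hu, hsupp δ hδ] with i hMi hsi
  have hlocal : ∀ k, conj (u i k) * h k = conj (u i k) * (closedBall k₀ δ).indicator h k :=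
    fun k => by
      by_cases hk : u i k = 0
      · simp [hk]
      · rw [Set.indicator_of_mem (hsi hk)]
  calc ‖∫ k, conj (u i k) * h k ∂μ‖ₑ
      = ‖∫ k, conj (u i k) * (closedBall k₀ δ).indicator h k ∂μ‖ₑ := by simp_rw [hlocal]
    _ ≤ eLpNorm (u i) 2 μ * eLpNorm ((closedBall k₀ δ).indicator h) 2 μ :=
        enorm_integral_conj_mul_le (hu_meas i) (hh.1.indicator measurableSet_closedBall)
    _ ≤ M * ENNReal.ofReal ε := by gcongr; exact hsmall _ measurableSet_closedBall hμδ
    _ = ENNReal.ofReal ε * M := mul_comm _ _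

/-- **The Weyl-sequence construction in the proof of the HVZ theorem (Theorem 3.3).**
For `g` continuous, `λ = g(k₀)`, `f` continuous with compact support and
`uₙ(k) = n^{ν/2} f(n(k − k₀))`, one has (i) `‖uₙ‖_{L²} = ‖f‖_{L²}`,
(ii) `‖(g − λ)uₙ‖_{L²} → 0`, and (iii) `uₙ ⇀ 0` weakly in `L²`. -/
theorem stmt_12 (ν : ℕ) (hν : 1 ≤ ν)
    (g : EuclideanSpace ℝ (Fin ν) → ℝ) (hg : Continuous g)
    (k₀ : EuclideanSpace ℝ (Fin ν)) (lam : ℝ) (hlam : lam = g k₀)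
    (f : EuclideanSpace ℝ (Fin ν) → ℂ) (hf : Continuous f) (hfc : HasCompactSupport f)
    (u : ℕ → EuclideanSpace ℝ (Fin ν) → ℂ)
    (hu : ∀ (n : ℕ) (k : EuclideanSpace ℝ (Fin ν)),
      u n k = (((n : ℝ) ^ ((ν : ℝ) / 2) : ℝ) : ℂ) * f ((n : ℝ) • (k - k₀))) :
    (∀ n : ℕ, 1 ≤ n →
      eLpNorm (u n) 2 (volume : Measure (EuclideanSpace ℝ (Fin ν))) =
        eLpNorm f 2 volume) ∧
    Tendsto (fun n : ℕ =>
        eLpNorm (fun k => ((g k : ℂ) - (lam : ℂ)) * u n k) 2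
          (volume : Measure (EuclideanSpace ℝ (Fin ν))))
      atTop (nhds 0) ∧
    (∀ h : EuclideanSpace ℝ (Fin ν) → ℂ,
      MemLp h 2 (volume : Measure (EuclideanSpace ℝ (Fin ν))) →
      Tendsto (fun n : ℕ => ∫ k, (starRingEnd ℂ) (u n k) * h k) atTop (nhds 0)) := by
  have hu_smul : ∀ n, u n = fun k => (n : ℝ) ^ ((ν : ℝ) / 2) • f ((n : ℝ) • (k - k₀)) :=
    fun n => funext fun k => by rw [hu, Complex.real_smul]
  have hnorm : ∀ n : ℕ, 1 ≤ n → eLpNorm (u n) 2 volume = eLpNorm f 2 volume := fun n hn => by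
    simpa [hu_smul, finrank_euclideanSpace_fin] using
      eLpNorm_smul_comp_smul_sub volume f 2 (Nat.cast_pos.2 hn) k₀
  have hbound : ∀ᶠ n in atTop, eLpNorm (u n) 2 volume ≤ eLpNorm f 2 volume :=
    (eventually_ge_atTop 1).mono fun n hn => (hnorm n hn).le
  have hfinite : eLpNorm f 2 volume ≠ ∞ := (hf.memLp_of_hasCompactSupport hfc).eLpNorm_ne_top
  have hu_cont : ∀ n, Continuous (u n) := fun n => by rw [hu_smul]; fun_prop
  have hsupp : ∀ δ > 0, ∀ᶠ n in atTop, support (u n) ⊆ closedBall k₀ δ := fun δ hδ => by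
    simpa only [hu_smul] using hfc.eventually_support_smul_comp_smul_sub_subset _
      tendsto_natCast_atTop_atTop k₀ hδ
  refine ⟨hnorm, ?_, fun h hh => ?_⟩
  · subst hlam
    exact tendsto_eLpNorm_sub_smul_of_support_subset_closedBall
      (Complex.continuous_ofReal.comp hg).continuousAt hfinite hbound hsupp
  · have : Nontrivial (EuclideanSpace ℝ (Fin ν)) :=
      Module.nontrivial_of_finrank_pos (R := ℝ) (by rwa [finrank_euclideanSpace_fin])
    exact tendsto_integral_conj_mul_of_support_subset_closedBall
      (fun n => (hu_cont n).aestronglyMeasurable) hfinite hbound hsupp hh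
end

section
/- Let 𝓗 be a complex Hilbert space, let W be a bounded operator on 𝓗 which is an orthogonal projection (W = W* = W²), and let (T_δ)_{δ>0} be a family of bounded self-adjoint operators on 𝓗 with T_δ² ≤ T_δ for every δ > 0, converging weakly to W as δ → 0 (i.e. ⟨ψ, T_δ φ⟩ → ⟨ψ, W φ⟩ for all ψ, φ ∈ 𝓗). Then T_δ converges strongly to W as δ → 0: ‖(W − T_δ)u‖ → 0 for every u ∈ 𝓗. -/
/-!
Since `T_δ² ≤ T_δ`, `‖T_δ u‖² ≤ re ⟪u, T_δ u⟫`, so expanding the square gives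
`‖(W - T_δ) u‖² ≤ ‖W u‖² - 2 re ⟪W u, T_δ u⟫ + re ⟪u, T_δ u⟫`. By weak convergence the right side
tends to `‖W u‖² - 2 ‖W u‖² + re ⟪u, W u⟫`, which vanishes because `re ⟪u, W u⟫ = ‖W u‖²` for an
orthogonal projection `W`.
-/
open scoped InnerProductSpace Topology
open Filter RCLike

namespace LinearMap

variable {𝕜 E : Type*} [RCLike 𝕜] [SeminormedAddCommGroup E] [InnerProductSpace 𝕜 E]

theorem IsSymmetric.norm_apply_sq {T : E →ₗ[𝕜] E} (hT : T.IsSymmetric) (x : E) :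
    ‖T x‖ ^ 2 = re ⟪x, T (T x)⟫_𝕜 := by
  rw [← hT, ← inner_self_eq_norm_sq (𝕜 := 𝕜)]

theorem IsSymmetricProjection.re_inner_self_apply {p : E →ₗ[𝕜] E} (hp : p.IsSymmetricProjection)
    (x : E) : re ⟪x, p x⟫_𝕜 = ‖p x‖ ^ 2 := by
  rw [hp.isSymmetric.norm_apply_sq, ← Module.End.mul_apply p p, hp.isIdempotentElem.eq]

theorem IsSymmetricProjection.tendsto_norm_sub_apply {ι : Type*} {l : Filter ι}
    {p : E →ₗ[𝕜] E} (hp : p.IsSymmetricProjection) {T : ι → E →ₗ[𝕜] E}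
    (hT : ∀ᶠ i in l, ∀ x, ‖T i x‖ ^ 2 ≤ re ⟪x, T i x⟫_𝕜)
    (hweak : ∀ x y, Tendsto (fun i => ⟪x, T i y⟫_𝕜) l (𝓝 ⟪x, p y⟫_𝕜)) (x : E) :
    Tendsto (fun i => ‖p x - T i x‖) l (𝓝 0) := by
  have hbound : ∀ᶠ i in l,
      ‖p x - T i x‖ ^ 2 ≤ ‖p x‖ ^ 2 - 2 * re ⟪p x, T i x⟫_𝕜 + re ⟪x, T i x⟫_𝕜 := by
    filter_upwards [hT] with i hi
    rw [@norm_sub_sq 𝕜]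
    linarith [hi x]
  have hlim : Tendsto (fun i => ‖p x‖ ^ 2 - 2 * re ⟪p x, T i x⟫_𝕜 + re ⟪x, T i x⟫_𝕜) l
      (𝓝 (‖p x‖ ^ 2 - 2 * re ⟪p x, p x⟫_𝕜 + re ⟪x, p x⟫_𝕜)) :=
    (tendsto_const_nhds.sub
      (((continuous_re.tendsto _).comp (hweak (p x) x)).const_mul 2)).add
      ((continuous_re.tendsto _).comp (hweak x x))
  rw [inner_self_eq_norm_sq, hp.re_inner_self_apply] at hlim
  have hsq : Tendsto (fun i => ‖p x - T i x‖ ^ 2) l (𝓝 0) :=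
    squeeze_zero' (.of_forall fun _ => sq_nonneg _) hbound (by convert hlim using 2; ring)
  simpa [Real.sqrt_sq (norm_nonneg _)] using hsq.sqrt

end LinearMap

/-- **Weak-to-strong convergence upgrade (final step of Theorem 5.1).** If `W` is an
orthogonal projection and `(T_δ)_{δ>0}` is a family of bounded self-adjoint operators
with `T_δ² ≤ T_δ` converging weakly to `W` as `δ → 0⁺`, then `T_δ → W` strongly. -/
theorem stmt_14 {H : Type*} [NormedAddCommGroup H] [InnerProductSpace ℂ H] [CompleteSpace H]
    (W : H →L[ℂ] H) (hWsa : IsSelfAdjoint W) (hWproj : W.comp W = W)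
    (T : ℝ → H →L[ℂ] H)
    (hTsa : ∀ δ : ℝ, 0 < δ → IsSelfAdjoint (T δ))
    (hTsq : ∀ δ : ℝ, 0 < δ → ∀ ψ : H, (⟪ψ, T δ (T δ ψ)⟫_ℂ).re ≤ (⟪ψ, T δ ψ⟫_ℂ).re)
    (hweak : ∀ ψ φ : H,
      Tendsto (fun δ => ⟪ψ, T δ φ⟫_ℂ) (𝓝[>] (0 : ℝ)) (nhds ⟪ψ, W φ⟫_ℂ)) :
    ∀ u : H, Tendsto (fun δ => ‖(W - T δ) u‖) (𝓝[>] (0 : ℝ)) (nhds 0) := by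
  have hW : (W : H →ₗ[ℂ] H).IsSymmetricProjection :=
    ⟨congrArg ContinuousLinearMap.toLinearMap hWproj, hWsa.isSymmetric⟩
  have hT : ∀ᶠ δ in 𝓝[>] (0 : ℝ), ∀ ψ : H, ‖T δ ψ‖ ^ 2 ≤ (⟪ψ, T δ ψ⟫_ℂ).re := by
    filter_upwards [self_mem_nhdsWithin] with δ (hδ : 0 < δ) ψ
    exact ((hTsa δ hδ).isSymmetric.norm_apply_sq ψ).trans_le (hTsq δ hδ ψ)
  exact hW.tendsto_norm_sub_apply (T := fun δ => T δ) hT hweak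
end

section
/- Let ν ∈ ℕ, ν ≥ 1, and let 0 < c₀ < c₁ < c₂. Let R₀ : ℝ^ν → ℝ be smooth with R₀(x) = 0 for |x| ≤ c₀/2 and with Hessian satisfying ⟨v, ∇²R₀(x) v⟩ ≥ 𝟙_{[c₀,c₁]}(|x|)·|v|² for all x, v ∈ ℝ^ν. Let F : ℝ → ℝ be smooth with 0 ≤ F ≤ 1, F(s) = 1 for s ≤ c₁ and F(s) = 0 for s ≥ c₂, and set R(x) = F(|x|)R₀(x). Then R is smooth, every partial derivative of R of every order is bounded on ℝ^ν, and there exists C > 0 such that for all x, v ∈ ℝ^ν: ⟨v, ∇²R(x) v⟩ ≥ 𝟙_{[c₀,c₁]}(|x|)·|v|² − C·𝟙_{[c₁,c₂]}(|x|)·|v|². -/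
/-- **The cut-off Graf function (eq:phasespaceineq in Theorem 4.2).** Let
`0 < c₀ < c₁ < c₂`, let `R₀` be smooth, vanishing for `|x| ≤ c₀/2`, with Hessian
`⟨v, ∇²R₀(x)v⟩ ≥ 𝟙_{[c₀,c₁]}(|x|)|v|²`, and let `F` be smooth with `0 ≤ F ≤ 1`,
`F = 1` on `(-∞, c₁]` and `F = 0` on `[c₂, ∞)`. Then `R(x) = F(|x|)R₀(x)` is smooth,
all its derivatives of all orders are bounded, and there exists `C > 0` with
`⟨v, ∇²R(x)v⟩ ≥ 𝟙_{[c₀,c₁]}(|x|)|v|² − C·𝟙_{[c₁,c₂]}(|x|)|v|²`. -/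
theorem stmt_17 (ν : ℕ) (hν : 1 ≤ ν) (c₀ c₁ c₂ : ℝ)
    (h0 : 0 < c₀) (h01 : c₀ < c₁) (h12 : c₁ < c₂)
    (R₀ : EuclideanSpace ℝ (Fin ν) → ℝ) (hR₀ : ContDiff ℝ (⊤ : ℕ∞) R₀)
    (hR₀0 : ∀ x : EuclideanSpace ℝ (Fin ν), ‖x‖ ≤ c₀ / 2 → R₀ x = 0)
    (hHess : ∀ (x v : EuclideanSpace ℝ (Fin ν)),
      Set.indicator (Set.Icc c₀ c₁) (fun _ => (1 : ℝ)) ‖x‖ * ‖v‖ ^ 2 ≤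
        iteratedFDeriv ℝ 2 R₀ x ![v, v])
    (F : ℝ → ℝ) (hF : ContDiff ℝ (⊤ : ℕ∞) F)
    (hF01 : ∀ s : ℝ, F s ∈ Set.Icc (0 : ℝ) 1)
    (hF1 : ∀ s : ℝ, s ≤ c₁ → F s = 1)
    (hF0 : ∀ s : ℝ, c₂ ≤ s → F s = 0) :
    ContDiff ℝ (⊤ : ℕ∞) (fun x : EuclideanSpace ℝ (Fin ν) => F ‖x‖ * R₀ x) ∧
    (∀ m : ℕ, ∃ M : ℝ, ∀ x : EuclideanSpace ℝ (Fin ν),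
      ‖iteratedFDeriv ℝ m (fun x : EuclideanSpace ℝ (Fin ν) => F ‖x‖ * R₀ x) x‖ ≤ M) ∧
    ∃ C : ℝ, 0 < C ∧ ∀ (x v : EuclideanSpace ℝ (Fin ν)),
      Set.indicator (Set.Icc c₀ c₁) (fun _ => (1 : ℝ)) ‖x‖ * ‖v‖ ^ 2 -
          C * Set.indicator (Set.Icc c₁ c₂) (fun _ => (1 : ℝ)) ‖x‖ * ‖v‖ ^ 2 ≤
        iteratedFDeriv ℝ 2 (fun x : EuclideanSpace ℝ (Fin ν) => F ‖x‖ * R₀ x) x ![v, v] := by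
  set R : EuclideanSpace ℝ (Fin ν) → ℝ := fun x => F ‖x‖ * R₀ x with hRdef
  -- smoothness
  have hsmooth : ContDiff ℝ (⊤ : ℕ∞) R := by
    rw [contDiff_iff_contDiffAt]
    intro x
    rcases lt_or_ge ‖x‖ (c₀ / 2) with hx | hx
    · have hev : R =ᶠ[nhds x] fun _ => 0 := by
        filter_upwards [Metric.ball_mem_nhds x (by linarith : (0:ℝ) < c₀/2 - ‖x‖)] with y hy
        have : ‖y‖ ≤ c₀ / 2 := by
          have := norm_sub_norm_le y x
          have hd : dist y x < c₀/2 - ‖x‖ := hy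
          rw [dist_eq_norm] at hd
          linarith
        simp [hRdef, hR₀0 y this]
      exact contDiffAt_const.congr_of_eventuallyEq hev
    · have hx0 : x ≠ 0 := by
        intro h; rw [h] at hx; simp at hx; linarith
      exact ((hF.contDiffAt).comp x (contDiffAt_norm ℝ hx0)).mul hR₀.contDiffAt
  -- compact support
  have hcs : HasCompactSupport R := by
    apply HasCompactSupport.intro (isCompact_closedBall (0 : EuclideanSpace ℝ (Fin ν)) c₂)
    intro x hx
    have : c₂ ≤ ‖x‖ := by
      rw [Metric.mem_closedBall, dist_zero_right] at hx; linarith [not_le.mp hx]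
    simp [hRdef, hF0 _ this]
  have hbdd : ∀ m : ℕ, ∃ M : ℝ, ∀ x, ‖iteratedFDeriv ℝ m R x‖ ≤ M := by
    intro m
    exact ((hcs.iteratedFDeriv m).exists_bound_of_continuous
      (hsmooth.continuous_iteratedFDeriv (mod_cast le_top)))
  have key : ∀ (f g : EuclideanSpace ℝ (Fin ν) → ℝ) (x), f =ᶠ[nhds x] g →
      iteratedFDeriv ℝ 2 f x = iteratedFDeriv ℝ 2 g x := by
    intro f g x h
    rw [← iteratedFDerivWithin_univ, ← iteratedFDerivWithin_univ]
    exact Filter.EventuallyEq.iteratedFDerivWithin_eq (by rwa [nhdsWithin_univ]) h.self_of_nhds 2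
  refine ⟨hsmooth, hbdd, ?_⟩
  obtain ⟨M, hM⟩ := hbdd 2
  have hM0 : 0 ≤ M := le_trans (norm_nonneg _) (hM 0)
  refine ⟨M + 1, by linarith, fun x v => ?_⟩
  have hquad : ∀ x, |iteratedFDeriv ℝ 2 R x ![v, v]| ≤ M * ‖v‖ ^ 2 := by
    intro x
    calc |iteratedFDeriv ℝ 2 R x ![v, v]| ≤ ‖iteratedFDeriv ℝ 2 R x‖ * ∏ i, ‖![v, v] i‖ :=
          (iteratedFDeriv ℝ 2 R x).le_opNorm ![v, v]
      _ ≤ M * ‖v‖ ^ 2 := by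
          have : (∏ i, ‖![v, v] i‖) = ‖v‖ ^ 2 := by
            simp [Fin.prod_univ_two, sq]
          rw [this]
          exact mul_le_mul_of_nonneg_right (hM x) (by positivity)
  rcases lt_or_ge ‖x‖ c₁ with hlt | hge
  · -- R = R₀ locally
    have hev : R =ᶠ[nhds x] R₀ := by
      filter_upwards [Metric.ball_mem_nhds x (by linarith : (0:ℝ) < c₁ - ‖x‖)] with y hy
      have : ‖y‖ ≤ c₁ := by
        have := norm_sub_norm_le y x
        have hd : dist y x < c₁ - ‖x‖ := hy
        rw [dist_eq_norm] at hd
        linarith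
      simp [hRdef, hF1 _ this]
    have heq : iteratedFDeriv ℝ 2 R x = iteratedFDeriv ℝ 2 R₀ x := key _ _ _ hev
    have hind : Set.indicator (Set.Icc c₁ c₂) (fun _ => (1:ℝ)) ‖x‖ = 0 := by
      apply Set.indicator_of_notMem
      simp only [Set.mem_Icc, not_and_or, not_le]
      left; exact hlt
    rw [hind]
    have := hHess x v
    rw [hRdef]
    rw [show iteratedFDeriv ℝ 2 (fun x => F ‖x‖ * R₀ x) x = iteratedFDeriv ℝ 2 R₀ x from heq]
    nlinarith [this]
  · rcases le_or_gt ‖x‖ c₂ with hle | hgt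
    · have hind1 : Set.indicator (Set.Icc c₀ c₁) (fun _ => (1:ℝ)) ‖x‖ * ‖v‖^2 ≤ ‖v‖^2 := by
        rcases le_or_gt ‖x‖ c₁ with h | h
        · rw [Set.indicator_of_mem (Set.mem_Icc.mpr ⟨by linarith, h⟩)]; simp
        · rw [Set.indicator_of_notMem (by simp [Set.mem_Icc]; intro; linarith)]
          simpa using sq_nonneg ‖v‖
      have hind2 : Set.indicator (Set.Icc c₁ c₂) (fun _ => (1:ℝ)) ‖x‖ = 1 :=
        Set.indicator_of_mem (Set.mem_Icc.mpr ⟨hge, hle⟩) _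
      rw [hind2]
      have h1 : -(M * ‖v‖^2) ≤ iteratedFDeriv ℝ 2 R x ![v, v] := neg_le_of_abs_le (hquad x)
      have hind0 : Set.indicator (Set.Icc c₀ c₁) (fun _ => (1:ℝ)) ‖x‖ * ‖v‖^2 ≤ ‖v‖^2 := hind1
      have hv : (0:ℝ) ≤ ‖v‖^2 := by positivity
      rw [hRdef] at *
      nlinarith [h1, hind0, hv]
    · have hind1 : Set.indicator (Set.Icc c₀ c₁) (fun _ => (1:ℝ)) ‖x‖ = 0 :=
        Set.indicator_of_notMem (by simp [Set.mem_Icc]; intro; linarith) _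
      have hind2 : Set.indicator (Set.Icc c₁ c₂) (fun _ => (1:ℝ)) ‖x‖ = 0 :=
        Set.indicator_of_notMem (by simp [Set.mem_Icc]; intro; linarith) _
      have hev : R =ᶠ[nhds x] fun _ => 0 := by
        filter_upwards [Metric.ball_mem_nhds x (by linarith : (0:ℝ) < ‖x‖ - c₂)] with y hy
        have : c₂ ≤ ‖y‖ := by
          have := norm_sub_norm_le x y
          have hd : dist y x < ‖x‖ - c₂ := hy
          rw [dist_eq_norm] at hd
          rw [← norm_neg (x - y), neg_sub] at this
          linarith
        simp [hRdef, hF0 _ this]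
      have heq : iteratedFDeriv ℝ 2 R x = iteratedFDeriv ℝ 2 (fun _ => (0:ℝ)) x :=
        key _ _ _ hev
      rw [hind1, hind2, hRdef]
      rw [show iteratedFDeriv ℝ 2 (fun x => F ‖x‖ * R₀ x) x
          = iteratedFDeriv ℝ 2 (fun _ => (0:ℝ)) x from heq]
      rw [iteratedFDeriv_zero_fun]
      simp
end
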